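/- arXiv:1202.0258 — 5 statements merged into one kernel-verified Lean document; each statement's English description precedes it below -/
import Mathlib

section
/- If the hazard rate of F_c is finite and non-decreasing, then U_c is slowly varying at infinity: for every κ > 0, lim_{t→∞} U_c(κt)/U_c(t) = 1. -/
/-!
The hazard rate `f_c / F̄_c` is the logarithmic derivative of `G = 1 / F̄_c`, and `U_c` is the
generalized inverse of `G`. Since `F̄_c` strictly decreases, the hazard rate is positive
somewhere, hence by monotonicity at least some `c > 0` beyond a point `x₀`. Then `G` grows at
least like `exp (c x)` beyond `x₀`, so its inverse grows at most like `log t / c`: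
`|U_c(κ t) - U_c(t)| ≤ |log κ| / c` for large `t`. As `U_c(t) → ∞`, this bounded difference is
negligible against `U_c(t)`.
-/

open Filter Topology Real Set Asymptotics

noncomputable def generalizedInverse (G : ℝ → ℝ) (t : ℝ) : ℝ :=
  sInf {x | t ≤ G x}

theorem tendsto_div_nhds_one_of_isBigO_sub {α : Type*} {l : Filter α} {u v : α → ℝ}
    (hu : Tendsto u l atTop) (hvu : (fun x => v x - u x) =O[l] fun _ => (1 : ℝ)) :
    Tendsto (fun x => v x / u x) l (𝓝 1) := by
  have hone : (fun _ => (1 : ℝ)) =o[l] u :=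
    (isLittleO_one_left_iff ℝ).2 (tendsto_norm_atTop_atTop.comp hu)
  exact (isEquivalent_iff_tendsto_one (hu.eventually_ne_atTop 0)).1 (hvu.trans_isLittleO hone)

theorem exists_deriv_neg_of_strictAnti {F F' : ℝ → ℝ} (hF : ∀ x, HasDerivAt F (F' x) x)
    (hanti : StrictAnti F) : ∃ x, F' x < 0 := by
  obtain ⟨ξ, -, hξ⟩ := exists_hasDerivAt_eq_slope F F' zero_lt_one
    (fun x _ => (hF x).continuousAt.continuousWithinAt) fun x _ => hF x
  refine ⟨ξ, ?_⟩
  rw [hξ, sub_zero, div_one, sub_neg]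
  exact hanti zero_lt_one

theorem exp_mul_sub_mul_le_of_hasDerivAt {G g : ℝ → ℝ} {c x₀ : ℝ}
    (hG : ∀ x, HasDerivAt G (g x) x) (hg : ∀ x, x₀ ≤ x → c * G x ≤ g x)
    {x y : ℝ} (hx : x₀ ≤ x) (hxy : x ≤ y) : exp (c * (y - x)) * G x ≤ G y := by
  have hmono : MonotoneOn (fun s => exp (-(c * s)) * G s) (Ici x₀) := by
    have hderiv : ∀ s, HasDerivAt (fun s => exp (-(c * s)) * G s)
        (exp (-(c * s)) * (g s - c * G s)) s := fun s =>
      (((hasDerivAt_id' s).const_mul c).fun_neg.exp.fun_mul (hG s)).congr_deriv (by ring)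
    refine monotoneOn_of_hasDerivWithinAt_nonneg (convex_Ici x₀)
      (fun s _ => (hderiv s).continuousAt.continuousWithinAt)
      (fun s _ => (hderiv s).hasDerivWithinAt) fun s hs => ?_
    rw [interior_Ici] at hs
    exact mul_nonneg (exp_pos _).le (sub_nonneg.2 (hg s (le_of_lt hs)))
  have h := hmono hx (hx.trans hxy) hxy
  calc exp (c * (y - x)) * G x = exp (c * y) * (exp (-(c * x)) * G x) := by
        rw [← mul_assoc, ← exp_add]
        ring_nf
    _ ≤ exp (c * y) * (exp (-(c * y)) * G y) := by gcongr
    _ = G y := by rw [← mul_assoc, ← exp_add, add_neg_cancel, exp_zero, one_mul]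

namespace generalizedInverse

variable {G : ℝ → ℝ} {M s t : ℝ}

theorem setOf_le_nonempty (hG_top : Tendsto G atTop atTop) (t : ℝ) :
    {x | t ≤ G x}.Nonempty :=
  (hG_top.eventually_ge_atTop t).exists

theorem bddBelow_setOf_le (hG : Monotone G) (hM : G M < t) : BddBelow {x | t ≤ G x} :=
  ⟨M, fun _ hx => (hG.reflect_lt (hM.trans_le hx)).le⟩

theorem le_apply (hG : Monotone G) (hG_top : Tendsto G atTop atTop) (hM : G M < t) :
    M ≤ generalizedInverse G t :=
  le_csInf (setOf_le_nonempty hG_top t) fun _ hx => (hG.reflect_lt (hM.trans_le hx)).le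

theorem tendsto_atTop (hG : Monotone G) (hG_top : Tendsto G atTop atTop) :
    Tendsto (generalizedInverse G) atTop atTop :=
  Filter.tendsto_atTop.2 fun M =>
    (eventually_gt_atTop (G M)).mono fun _ ht => le_apply hG hG_top ht

theorem mono (hG : Monotone G) (hG_top : Tendsto G atTop atTop) (hM : G M < s) (hst : s ≤ t) :
    generalizedInverse G s ≤ generalizedInverse G t :=
  csInf_le_csInf (bddBelow_setOf_le hG hM) (setOf_le_nonempty hG_top t) fun _ hx => hst.trans hx

variable {c x₀ : ℝ}

theorem le_add_log_sub_log (hG : Monotone G) (hG_top : Tendsto G atTop atTop) (hc : 0 < c)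
    (hgrowth : ∀ x y, x₀ ≤ x → x ≤ y → exp (c * (y - x)) * G x ≤ G y)
    (hs : 0 < s) (hx₀ : G x₀ < s) (hst : s ≤ t) :
    generalizedInverse G t ≤ generalizedInverse G s + (log t - log s) / c := by
  set D := (log t - log s) / c
  suffices generalizedInverse G t - D ≤ generalizedInverse G s by linarith
  refine le_csInf (setOf_le_nonempty hG_top s) fun x hx => ?_
  have hx₀x : x₀ ≤ x := (hG.reflect_lt (hx₀.trans_le hx)).le
  have hD : 0 ≤ D := div_nonneg (sub_nonneg.2 (log_le_log hs hst)) hc.le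
  have hmem : t ≤ G (x + D) := calc
    t = exp (c * (x + D - x)) * s := by
        rw [add_sub_cancel_left, mul_div_cancel₀ _ hc.ne', exp_sub,
          exp_log (hs.trans_le hst), exp_log hs, div_mul_cancel₀ _ hs.ne']
    _ ≤ exp (c * (x + D - x)) * G x := by gcongr; exact hx
    _ ≤ G (x + D) := hgrowth x (x + D) hx₀x (le_add_of_nonneg_right hD)
  have := csInf_le (bddBelow_setOf_le hG (hx₀.trans_le hst)) hmem
  unfold generalizedInverse
  linarith

theorem abs_sub_le (hG : Monotone G) (hG_top : Tendsto G atTop atTop) (hc : 0 < c)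
    (hgrowth : ∀ x y, x₀ ≤ x → x ≤ y → exp (c * (y - x)) * G x ≤ G y)
    (hs : 0 < s) (ht : 0 < t) (hx₀s : G x₀ < s) (hx₀t : G x₀ < t) :
    |generalizedInverse G t - generalizedInverse G s| ≤ |log t - log s| / c := by
  wlog hst : s ≤ t generalizing s t
  · rw [abs_sub_comm, abs_sub_comm (log t)]
    exact this ht hs hx₀t hx₀s (le_of_not_ge hst)
  rw [abs_of_nonneg (sub_nonneg.2 (mono hG hG_top hx₀s hst)),
    abs_of_nonneg (sub_nonneg.2 (log_le_log hs hst))]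
  linarith [le_add_log_sub_log hG hG_top hc hgrowth hs hx₀s hst]

end generalizedInverse

theorem stmt3_general (Fbar fc Uc : ℝ → ℝ)
    (hFbar_pos : ∀ x, 0 < Fbar x)
    (hFbar_anti : StrictAnti Fbar)
    (hFbar_tendsto : Filter.Tendsto Fbar Filter.atTop (nhds 0))
    (hderiv : ∀ x, HasDerivAt Fbar (-(fc x)) x)
    (hhaz : Monotone fun x => fc x / Fbar x)
    (hUc : ∀ t, Uc t = sInf {x : ℝ | 1 / Fbar x ≥ t}) :
    ∀ κ > (0 : ℝ),
      Filter.Tendsto (fun t => Uc (κ * t) / Uc t) Filter.atTop (nhds 1) := by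
  intro κ hκ
  set G : ℝ → ℝ := fun x => 1 / Fbar x
  obtain rfl : Uc = generalizedInverse G := funext hUc
  have hG_mono : Monotone G := fun x y hxy =>
    one_div_le_one_div_of_le (hFbar_pos y) (hFbar_anti.antitone hxy)
  have hG_top : Tendsto G atTop atTop := by
    have hF : Tendsto Fbar atTop (𝓝[>] 0) :=
      tendsto_nhdsWithin_iff.2 ⟨hFbar_tendsto, Eventually.of_forall hFbar_pos⟩
    exact hF.inv_tendsto_nhdsGT_zero.congr fun x => (one_div (Fbar x)).symm
  have hG_deriv : ∀ x, HasDerivAt G (fc x / Fbar x * G x) x := fun x => by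
    simp only [G, one_div]
    exact ((hderiv x).fun_inv (hFbar_pos x).ne').congr_deriv (by field_simp)
  obtain ⟨x₀, hx₀⟩ := exists_deriv_neg_of_strictAnti hderiv hFbar_anti
  have hc : 0 < fc x₀ / Fbar x₀ := div_pos (neg_neg_iff_pos.1 hx₀) (hFbar_pos x₀)
  have hgrowth := fun x y (hx : x₀ ≤ x) (hxy : x ≤ y) =>
    exp_mul_sub_mul_le_of_hasDerivAt hG_deriv
      (fun z hz => mul_le_mul_of_nonneg_right (hhaz hz) (one_div_pos.2 (hFbar_pos z)).le) hx hxy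
  refine tendsto_div_nhds_one_of_isBigO_sub (generalizedInverse.tendsto_atTop hG_mono hG_top)
    (IsBigO.of_bound (|log κ| / (fc x₀ / Fbar x₀)) ?_)
  have hκt : Tendsto (fun t => κ * t) atTop atTop := tendsto_id.const_mul_atTop hκ
  filter_upwards [eventually_gt_atTop 0, eventually_gt_atTop (G x₀),
    hκt.eventually_gt_atTop (G x₀)] with t ht hx₀t hx₀κt
  rw [norm_one, mul_one, Real.norm_eq_abs]
  convert generalizedInverse.abs_sub_le hG_mono hG_top hc hgrowth ht (mul_pos hκ ht) hx₀t hx₀κt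
    using 3
  rw [log_mul hκ.ne' ht.ne', add_sub_cancel_right]

/-- If the hazard rate `f_c / F̄_c` is finite and non-decreasing, then
`U_c` is slowly varying at infinity: for every `κ > 0`,
`U_c(κ t) / U_c(t) → 1` as `t → ∞`. -/
theorem stmt3 (Fbar fc Uc : ℝ → ℝ)
    (hFbar_pos : ∀ x, 0 < Fbar x)
    (hFbar_le : ∀ x, Fbar x ≤ 1)
    (hFbar_anti : StrictAnti Fbar)
    (hFbar_tendsto : Filter.Tendsto Fbar Filter.atTop (nhds 0))
    (hderiv : ∀ x, HasDerivAt Fbar (-(fc x)) x)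
    (hhaz : Monotone fun x => fc x / Fbar x)
    (hUc : ∀ t, Uc t = sInf {x : ℝ | 1 / Fbar x ≥ t}) :
    ∀ κ > (0 : ℝ),
      Filter.Tendsto (fun t => Uc (κ * t) / Uc t) Filter.atTop (nhds 1) :=
  stmt3_general Fbar fc Uc hFbar_pos hFbar_anti hFbar_tendsto hderiv hhaz hUc
end

section
/- If the hazard rate of F_c is finite and non-decreasing, then lim_{t→∞} (U_c(t) ln U_c(t)) / (∫_1^t U_c(x)/x dx) = 0. -/
/-!
The cumulative hazard `Λ = -log F̄` is increasing and convex, its derivative being the hazard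
rate, and `U_c(eˢ) = Λ⁻¹(s)` for `s ≥ Λ(1)`. As the inverse of an increasing convex function,
`s ↦ U_c(eˢ)` is concave. Concavity between `s₀` and `ln t` gives
`U_c(x) ≥ (ln x - s₀) / (ln t - s₀) · U_c(t)` on `[e^s₀, t]`, hence
`∫₁ᵗ U_c(x)/x dx ≥ U_c(t) ln t / 4` for large `t`; it also bounds `U_c(eˢ)` by an affine function
of `s`, so `ln U_c(t) = o(ln t)`. The ratio is thus at most `4 ln U_c(t) / ln t → 0`.
-/

open MeasureTheory Real Filter Set Topology Asymptotics

namespace Set.RightInvOn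

variable {G φ : ℝ → ℝ} {S : Set ℝ}

theorem concaveOn (hφ : RightInvOn φ G S) (hS : Convex ℝ S) (hGconv : ConvexOn ℝ univ G)
    (hG : StrictMono G) : ConcaveOn ℝ S φ := by
  refine ⟨hS, fun x hx y hy a b ha hb hab => ?_⟩
  rw [← hG.le_iff_le, hφ.eq (hS hx hy ha hb hab)]
  calc G (a • φ x + b • φ y) ≤ a • G (φ x) + b • G (φ y) := hGconv.2 trivial trivial ha hb hab
    _ = a • x + b • y := by rw [hφ.eq hx, hφ.eq hy]

theorem tendsto_atTop {s₀ : ℝ} (hφ : RightInvOn φ G (Ici s₀)) (hG : Monotone G) :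
    Tendsto φ atTop atTop := by
  refine Filter.tendsto_atTop.2 fun M => ?_
  filter_upwards [eventually_ge_atTop s₀, eventually_gt_atTop (G M)] with s hs hsM
  by_contra! h
  have := hG h.le
  rw [hφ.eq hs] at this
  linarith

end Set.RightInvOn

theorem csInf_setOf_le_apply_eq {G : ℝ → ℝ} (hG : StrictMono G) {a s : ℝ} (ha : G a = s) :
    sInf {x | s ≤ G x} = a := by
  have : {x | s ≤ G x} = Ici a := by ext x; simp [← ha, hG.le_iff_le]
  rw [this, csInf_Ici]

theorem rightInvOn_csInf_setOf_le {G : ℝ → ℝ} (hG : StrictMono G) (hGc : Continuous G)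
    (hGtop : Tendsto G atTop atTop) (b : ℝ) :
    RightInvOn (fun s => sInf {x | s ≤ G x}) G (Ici (G b)) := by
  intro s hs
  obtain ⟨M, hbM, hsM⟩ := ((eventually_ge_atTop b).and (hGtop.eventually_ge_atTop s)).exists
  obtain ⟨a, -, ha⟩ := intermediate_value_Icc hbM hGc.continuousOn ⟨hs, hsM⟩
  simp only [csInf_setOf_le_apply_eq hG ha, ha]

theorem ConcaveOn.isBigO_id {φ : ℝ → ℝ} {s₀ : ℝ} (hφ : ConcaveOn ℝ (Ici s₀) φ)
    (h0 : ∀ᶠ s in atTop, 0 ≤ φ s) : φ =O[atTop] id := by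
  have hslope {s : ℝ} (hs : s₀ + 1 < s) :
      φ s ≤ φ (s₀ + 1) + (φ (s₀ + 1) - φ s₀) * (s - (s₀ + 1)) := by
    have := hφ.slope_anti_adjacent self_mem_Ici (mem_Ici.2 (by linarith)) (lt_add_one s₀) hs
    rw [add_sub_cancel_left, div_one, div_le_iff₀ (by linarith)] at this
    linarith
  have haffine : (fun s => φ (s₀ + 1) + (φ (s₀ + 1) - φ s₀) * (s - (s₀ + 1))) =O[atTop] id :=
    (isLittleO_const_id_atTop (φ (s₀ + 1))).isBigO.add
      (((isBigO_refl id atTop).sub (isLittleO_const_id_atTop (s₀ + 1)).isBigO).const_mul_left _)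
  refine (IsBigO.of_bound' ?_).trans haffine
  filter_upwards [h0, eventually_gt_atTop (s₀ + 1)] with s hs hs₁
  rw [norm_of_nonneg hs, norm_of_nonneg (hs.trans (hslope hs₁))]
  exact hslope hs₁

theorem ConcaveOn.tendsto_log_div_atTop {φ : ℝ → ℝ} {s₀ : ℝ} (hφ : ConcaveOn ℝ (Ici s₀) φ)
    (htop : Tendsto φ atTop atTop) : Tendsto (fun s => log (φ s) / s) atTop (𝓝 0) :=
  ((isLittleO_log_id_atTop.comp_tendsto htop).trans_isBigO
    (hφ.isBigO_id (htop.eventually_ge_atTop 0))).tendsto_div_nhds_zero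

theorem continuousOn_log_sub_div (c : ℝ) : ContinuousOn (fun x => (log x - c) / x) (Ioi 0) := by
  fun_prop (disch := exact fun x hx => ne_of_gt hx)

theorem integral_log_sub_div {a b : ℝ} (c : ℝ) (ha : 0 < a) (hb : 0 < b) :
    ∫ x in a..b, (log x - c) / x = ((log b - c) ^ 2 - (log a - c) ^ 2) / 2 := by
  have hpos : uIcc a b ⊆ Ioi 0 := fun x hx =>
    (lt_min ha hb).trans_le (by simpa [uIcc] using hx.1)
  have hderiv (x : ℝ) (hx : x ∈ uIcc a b) :
      HasDerivAt (fun y => (log y - c) ^ 2 / 2) ((log x - c) / x) x := by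
    have h := (((hasDerivAt_log (ne_of_gt (hpos hx))).sub_const c).pow 2).div_const 2
    simp only [Pi.pow_apply] at h
    exact h.congr_deriv (by norm_num; ring)
  rw [intervalIntegral.integral_eq_sub_of_hasDerivAt hderiv
    ((continuousOn_log_sub_div c).mono hpos).intervalIntegrable]
  ring

section LogConcaveProfile

variable {U : ℝ → ℝ} {s₀ : ℝ}

theorem MonotoneOn.of_comp_exp (hmono : MonotoneOn (U ∘ exp) (Ici s₀)) :
    MonotoneOn U (Ici (exp s₀)) := by
  intro x hx y hy hxy
  have hx₀ : 0 < x := (exp_pos s₀).trans_le hx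
  have := hmono (mem_Ici.2 ((le_log_iff_exp_le hx₀).2 hx))
    (mem_Ici.2 ((le_log_iff_exp_le (hx₀.trans_le hxy)).2 hy)) (log_le_log hx₀ hxy)
  simpa [exp_log hx₀, exp_log (hx₀.trans_le hxy)] using this

theorem intervalIntegrable_div_of_monotoneOn (hmono : MonotoneOn U (Ici (exp s₀))) {t : ℝ}
    (ht : exp s₀ ≤ t) : IntervalIntegrable (fun x => U x / x) volume (exp s₀) t := by
  have hpos : ∀ x ∈ uIcc (exp s₀) t, x ≠ 0 := fun x hx =>
    ((exp_pos s₀).trans_le (uIcc_of_le ht ▸ hx).1).ne'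
  have hU : MonotoneOn U (uIcc (exp s₀) t) :=
    hmono.mono (by simp [uIcc_of_le ht, Icc_subset_Ici_self])
  simpa only [div_eq_mul_inv] using
    hU.intervalIntegrable.mul_continuousOn (continuousOn_inv₀.mono hpos)

theorem le_of_concaveOn_comp_exp (hconc : ConcaveOn ℝ (Ici s₀) (U ∘ exp))
    (hU₀ : 0 ≤ U (exp s₀)) {x t : ℝ} (ht : s₀ < log t) (hx : x ∈ Icc (exp s₀) t) :
    (log x - s₀) / (log t - s₀) * U t ≤ U x := by
  have hx₀ : 0 < x := (exp_pos s₀).trans_le hx.1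
  have hL : 0 < log t - s₀ := sub_pos.2 ht
  have hsx : s₀ ≤ log x := (le_log_iff_exp_le hx₀).2 hx.1
  have hxt : log x ≤ log t := log_le_log hx₀ hx.2
  have key := hconc.2 self_mem_Ici (mem_Ici.2 ht.le) (div_nonneg (sub_nonneg.2 hxt) hL.le)
    (div_nonneg (sub_nonneg.2 hsx) hL.le) (by field_simp; ring)
  have hcomb : (log t - log x) / (log t - s₀) * s₀ + (log x - s₀) / (log t - s₀) * log t
      = log x := by field_simp; ring
  simp only [smul_eq_mul, Function.comp_apply, hcomb, exp_log hx₀,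
    exp_log (hx₀.trans_le hx.2)] at key
  nlinarith [mul_nonneg (div_nonneg (sub_nonneg.2 hxt) hL.le) hU₀]

theorem mul_log_sub_div_two_le_integral (hconc : ConcaveOn ℝ (Ici s₀) (U ∘ exp))
    (hmono : MonotoneOn (U ∘ exp) (Ici s₀)) (hU₀ : 0 ≤ U (exp s₀)) {t : ℝ} (ht : exp s₀ < t) :
    U t * (log t - s₀) / 2 ≤ ∫ x in exp s₀..t, U x / x := by
  have ht₀ : 0 < t := (exp_pos s₀).trans ht
  have hlog : s₀ < log t := (lt_log_iff_exp_lt ht₀).2 ht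
  have hL : 0 < log t - s₀ := sub_pos.2 hlog
  have hmain : ∫ x in exp s₀..t, U t / (log t - s₀) * ((log x - s₀) / x)
      = U t * (log t - s₀) / 2 := by
    rw [intervalIntegral.integral_const_mul, integral_log_sub_div s₀ (exp_pos s₀) ht₀, log_exp]
    field_simp
    ring
  rw [← hmain]
  refine intervalIntegral.integral_mono_on ht.le ?_
    (intervalIntegrable_div_of_monotoneOn hmono.of_comp_exp ht.le) fun x hx => ?_
  · refine (((continuousOn_log_sub_div s₀).mono fun x hx => ?_).const_smul
      (U t / (log t - s₀))).intervalIntegrable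
    exact (exp_pos s₀).trans_le (uIcc_of_le ht.le ▸ hx).1
  · have hx₀ : 0 < x := (exp_pos s₀).trans_le hx.1
    calc U t / (log t - s₀) * ((log x - s₀) / x) = (log x - s₀) / (log t - s₀) * U t / x := by
          ring
      _ ≤ U x / x := by gcongr; exact le_of_concaveOn_comp_exp hconc hU₀ hlog hx

theorem eventually_mul_log_div_four_le_integral (hconc : ConcaveOn ℝ (Ici s₀) (U ∘ exp))
    (hmono : MonotoneOn (U ∘ exp) (Ici s₀)) (hU₀ : 0 ≤ U (exp s₀)) (hU : ∀ᶠ t in atTop, 1 ≤ U t)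
    (hint : IntervalIntegrable (fun x => U x / x) volume 1 (exp s₀)) :
    ∀ᶠ t in atTop, U t * log t / 4 ≤ ∫ x in (1 : ℝ)..t, U x / x := by
  set C := ∫ x in (1 : ℝ)..exp s₀, U x / x with hC
  filter_upwards [eventually_gt_atTop (exp s₀), hU,
    tendsto_log_atTop.eventually_ge_atTop (2 * s₀ + 4 * |C|)] with t ht hUt hlog
  rw [← intervalIntegral.integral_add_adjacent_intervals hint
    (intervalIntegrable_div_of_monotoneOn hmono.of_comp_exp ht.le)]
  have := mul_log_sub_div_two_le_integral hconc hmono hU₀ ht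
  rw [← hC]
  nlinarith [neg_abs_le C, mul_le_mul_of_nonneg_right hUt
    (by linarith [abs_nonneg C] : 0 ≤ log t - 2 * s₀)]

theorem tendsto_mul_log_div_integral_of_concaveOn (hs₀ : 0 ≤ s₀)
    (hconc : ConcaveOn ℝ (Ici s₀) (U ∘ exp)) (hmono : MonotoneOn (U ∘ exp) (Ici s₀))
    (hU₀ : 0 ≤ U (exp s₀)) (htop : Tendsto (U ∘ exp) atTop atTop) :
    Tendsto (fun t => U t * log (U t) / ∫ x in (1 : ℝ)..t, U x / x) atTop (𝓝 0) := by
  have hU : ∀ᶠ t in atTop, 1 ≤ U t :=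
    (tendsto_comp_exp_atTop.1 htop).eventually_ge_atTop 1
  by_cases hint : IntervalIntegrable (fun x => U x / x) volume 1 (exp s₀)
  · have hratio : Tendsto (fun t => 4 * (log (U t) / log t)) atTop (𝓝 0) := by
      have := (hconc.tendsto_log_div_atTop htop).const_mul 4
      rw [mul_zero] at this
      exact tendsto_comp_exp_atTop.1 (by simpa only [Function.comp_apply, log_exp] using this)
    have hI := eventually_mul_log_div_four_le_integral hconc hmono hU₀ hU hint
    have hnum : ∀ᶠ t in atTop, 0 ≤ U t * log (U t) :=
      hU.mono fun t h => mul_nonneg (zero_le_one.trans h) (log_nonneg h)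
    have hden : ∀ᶠ t in atTop, 0 < U t * log t / 4 := by
      filter_upwards [hU, tendsto_log_atTop.eventually_gt_atTop 0] with t hUt hlog
      positivity
    refine squeeze_zero' ?_ ?_ hratio
    · filter_upwards [hI, hnum, hden] with t hI hnum hden
      exact div_nonneg hnum (hden.le.trans hI)
    · filter_upwards [hI, hnum, hden] with t hI hnum hden
      have hUt : U t ≠ 0 := by rintro h; simp [h] at hden
      have hlog : log t ≠ 0 := by rintro h; simp [h] at hden
      calc _ ≤ U t * log (U t) / (U t * log t / 4) := div_le_div_of_nonneg_left hnum hden hI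
        _ = 4 * (log (U t) / log t) := by field_simp
  -- Otherwise the integrals from `1` to `t ≥ exp s₀` are junk zeros, and so is the ratio.
  · refine tendsto_const_nhds.congr' ?_
    filter_upwards [eventually_ge_atTop (exp s₀)] with t ht
    rw [intervalIntegral.integral_undef fun h => hint (h.mono_set ?_), div_zero]
    exact uIcc_subset_uIcc_left (mem_uIcc_of_le (one_le_exp hs₀) ht)

end LogConcaveProfile

noncomputable def cumHazard (Fbar : ℝ → ℝ) (x : ℝ) : ℝ := -log (Fbar x)

section CumHazard

variable {Fbar : ℝ → ℝ}

theorem hasDerivAt_cumHazard {f x : ℝ} (hpos : 0 < Fbar x) (hderiv : HasDerivAt Fbar (-f) x) :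
    HasDerivAt (cumHazard Fbar) (f / Fbar x) x := by
  have := (hderiv.log hpos.ne').neg
  simp only [Pi.neg_def, neg_div, neg_neg] at this
  exact this

theorem convexOn_cumHazard {fc : ℝ → ℝ} (hpos : ∀ x, 0 < Fbar x)
    (hderiv : ∀ x, HasDerivAt Fbar (-(fc x)) x) (hhaz : Monotone fun x => fc x / Fbar x) :
    ConvexOn ℝ univ (cumHazard Fbar) := by
  have hd x := hasDerivAt_cumHazard (hpos x) (hderiv x)
  refine Monotone.convexOn_univ_of_deriv (fun x => (hd x).differentiableAt) ?_
  rwa [funext fun x => (hd x).deriv]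

theorem StrictAnti.strictMono_cumHazard (hanti : StrictAnti Fbar) (hpos : ∀ x, 0 < Fbar x) :
    StrictMono (cumHazard Fbar) := fun _ _ hxy =>
  neg_lt_neg (log_lt_log (hpos _) (hanti hxy))

theorem cumHazard_nonneg (hpos : ∀ x, 0 < Fbar x) (hle : ∀ x, Fbar x ≤ 1) (x : ℝ) :
    0 ≤ cumHazard Fbar x :=
  neg_nonneg.2 (log_nonpos (hpos x).le (hle x))

theorem tendsto_cumHazard_atTop (hpos : ∀ x, 0 < Fbar x) (hlim : Tendsto Fbar atTop (𝓝 0)) :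
    Tendsto (cumHazard Fbar) atTop atTop :=
  tendsto_neg_atBot_atTop.comp <| tendsto_log_nhdsGT_zero.comp <|
    tendsto_nhdsWithin_of_tendsto_nhds_of_eventually_within _ hlim (.of_forall hpos)

theorem setOf_one_div_ge_eq (hpos : ∀ x, 0 < Fbar x) {t : ℝ} (ht : 0 < t) :
    {x | 1 / Fbar x ≥ t} = {x | log t ≤ cumHazard Fbar x} := by
  ext x
  change t ≤ 1 / Fbar x ↔ log t ≤ -log (Fbar x)
  rw [le_neg, ← log_inv, log_le_log_iff (hpos x) (inv_pos.2 ht), one_div,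
    le_inv_comm₀ ht (hpos x)]

end CumHazard

/-- If the hazard rate `f_c / F̄_c` is finite and non-decreasing, then
`U_c(t) ln U_c(t) / ∫_1^t U_c(x)/x dx → 0` as `t → ∞`. -/
theorem stmt4 (Fbar fc Uc : ℝ → ℝ)
    (hFbar_pos : ∀ x, 0 < Fbar x)
    (hFbar_le : ∀ x, Fbar x ≤ 1)
    (hFbar_anti : StrictAnti Fbar)
    (hFbar_tendsto : Filter.Tendsto Fbar Filter.atTop (nhds 0))
    (hderiv : ∀ x, HasDerivAt Fbar (-(fc x)) x)
    (hhaz : Monotone fun x => fc x / Fbar x)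
    (hUc : ∀ t, Uc t = sInf {x : ℝ | 1 / Fbar x ≥ t}) :
    Filter.Tendsto
      (fun t => Uc t * Real.log (Uc t) / ∫ x in (1 : ℝ)..t, Uc x / x)
      Filter.atTop (nhds 0) := by
  have hG := hFbar_anti.strictMono_cumHazard hFbar_pos
  have hprofile : Uc ∘ exp = fun s => sInf {x | s ≤ cumHazard Fbar x} := funext fun s => by
    rw [Function.comp_apply, hUc, setOf_one_div_ge_eq hFbar_pos (exp_pos s), log_exp]
  have hinv : RightInvOn (Uc ∘ exp) (cumHazard Fbar) (Ici (cumHazard Fbar 1)) :=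
    hprofile ▸ rightInvOn_csInf_setOf_le hG
      (continuous_iff_continuousAt.2 fun x =>
        (hasDerivAt_cumHazard (hFbar_pos x) (hderiv x)).continuousAt)
      (tendsto_cumHazard_atTop hFbar_pos hFbar_tendsto) 1
  have hU₀ : Uc (exp (cumHazard Fbar 1)) = 1 := hG.injective (hinv.eq self_mem_Ici)
  exact tendsto_mul_log_div_integral_of_concaveOn (cumHazard_nonneg hFbar_pos hFbar_le 1)
    (hinv.concaveOn (convex_Ici _) (convexOn_cumHazard hFbar_pos hderiv hhaz) hG)
    (Function.monotoneOn_of_rightInvOn_of_mapsTo (hG.monotone.monotoneOn univ) hinv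
      (mapsTo_univ _ _))
    (hU₀.symm ▸ zero_le_one) (hinv.tendsto_atTop hG.monotone)
end

section
/- Let Y_1,…,Y_n be i.i.d. square-integrable real random variables with order statistics Y_{1,n} ≤ … ≤ Y_{n,n}. Then E[Y_{n,n}²] ≤ (E[Y_{n,n}])² + E[(Y_{n,n} − Y_{n−1,n})²]. -/
/-!
Efron–Stein: if `f` is a function of independent coordinates and each `g i` ignores the `i`-th
coordinate, then `Var f ≤ ∑ i, E[(f - g i)²]`. Splitting off one coordinate, the law of total
variance on a product `μ ⊗ ν` gives `Var F = E_t Var(F(t, ·)) + Var(E F(t, ·))`; the first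
term is handled by induction, and by Jensen the second is at most `E[(F - G)²]` for any `G` that
does not depend on `t`.

For the maximum take `g i` = the maximum of the other coordinates. It differs from the maximum
only at the argmax `i₀`, where `M - g i₀ ≤ M - M2`, so `∑ i, (M - g i)² ≤ (M - M2)²`.
-/

open MeasureTheory ProbabilityTheory

lemma sq_integral_le_integral_sq {Ω : Type*} [MeasurableSpace Ω] {μ : Measure Ω}
    [IsProbabilityMeasure μ] {X : Ω → ℝ} (hX : MemLp X 2 μ) :
    (∫ ω, X ω ∂μ) ^ 2 ≤ ∫ ω, X ω ^ 2 ∂μ := by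
  have := variance_nonneg X μ
  rw [variance_eq_sub hX] at this
  simpa [Pi.pow_apply, sub_nonneg] using this

section Prod

variable {α β : Type*} [MeasurableSpace α] [MeasurableSpace β] {μ : Measure α}
  {ν : Measure β} {F : α × β → ℝ}

lemma MeasureTheory.MemLp.ae_memLp_two_prodMk_left [SFinite μ] [SFinite ν]
    (hF : MemLp F 2 (μ.prod ν)) :
    ∀ᵐ t ∂μ, MemLp (fun y => F (t, y)) 2 ν := by
  filter_upwards [hF.aestronglyMeasurable.prodMk_left, hF.integrable_sq.prod_right_ae]
    with t hmeas hsq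
  exact (memLp_two_iff_integrable_sq hmeas).2 hsq

lemma MeasureTheory.MemLp.integral_prod_left [SFinite μ] [IsProbabilityMeasure ν]
    (hF : MemLp F 2 (μ.prod ν)) :
    MemLp (fun t => ∫ y, F (t, y) ∂ν) 2 μ := by
  have hmeas := hF.aestronglyMeasurable.integral_prod_right'
  refine (memLp_two_iff_integrable_sq hmeas).2 <|
    hF.integrable_sq.integral_prod_left.mono' (hmeas.pow 2) ?_
  filter_upwards [hF.ae_memLp_two_prodMk_left] with t ht
  rw [Real.norm_of_nonneg (sq_nonneg _)]
  exact sq_integral_le_integral_sq ht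

variable [IsProbabilityMeasure μ] [IsProbabilityMeasure ν]

theorem variance_prod_eq_integral_variance_add_variance_integral (hF : MemLp F 2 (μ.prod ν)) :
    Var[F; μ.prod ν] =
      ∫ t, Var[fun y => F (t, y); ν] ∂μ + Var[fun t => ∫ y, F (t, y) ∂ν; μ] := by
  have hh := hF.integral_prod_left
  have hslice : (fun t => Var[fun y => F (t, y); ν]) =ᵐ[μ]
      fun t => ∫ y, F (t, y) ^ 2 ∂ν - (∫ y, F (t, y) ∂ν) ^ 2 := by
    filter_upwards [hF.ae_memLp_two_prodMk_left] with t ht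
    simp [variance_eq_sub ht]
  rw [variance_eq_sub hF, variance_eq_sub hh, integral_congr_ae hslice,
    integral_sub hF.integrable_sq.integral_prod_left hh.integrable_sq]
  simp only [Pi.pow_apply]
  rw [integral_prod _ hF.integrable_sq, integral_prod _ (hF.integrable one_le_two)]
  ring

theorem variance_integral_prod_le_integral_sq_sub (hF : MemLp F 2 (μ.prod ν)) {G : β → ℝ}
    (hFG : MemLp (fun p => F p - G p.2) 2 (μ.prod ν)) :
    Var[fun t => ∫ y, F (t, y) ∂ν; μ] ≤ ∫ p, (F p - G p.2) ^ 2 ∂(μ.prod ν) := by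
  have hG : Integrable G ν := by
    refine Integrable.of_comp_snd (μ := μ) ?_ (IsProbabilityMeasure.ne_zero μ)
    have hsub : (F - fun p => F p - G p.2) = fun p => G p.2 := by ext; simp
    simpa [hsub] using (hF.sub hFG).integrable one_le_two
  set c := ∫ y, G y ∂ν
  have hmeas := hF.aestronglyMeasurable.integral_prod_right'
  calc Var[fun t => ∫ y, F (t, y) ∂ν; μ]
      = Var[fun t => ∫ y, F (t, y) ∂ν - c; μ] := (variance_sub_const hmeas c).symm
    _ ≤ ∫ t, (∫ y, F (t, y) ∂ν - c) ^ 2 ∂μ :=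
      variance_le_expectation_sq (hmeas.sub aestronglyMeasurable_const)
    _ ≤ ∫ t, ∫ y, (F (t, y) - G y) ^ 2 ∂ν ∂μ := by
      refine integral_mono_of_nonneg (.of_forall fun _ => sq_nonneg _)
        hFG.integrable_sq.integral_prod_left ?_
      filter_upwards [hF.ae_memLp_two_prodMk_left, hFG.ae_memLp_two_prodMk_left]
        with t hFt hFGt
      rw [← integral_sub (hFt.integrable one_le_two) hG]
      exact sq_integral_le_integral_sq hFGt
    _ = ∫ p, (F p - G p.2) ^ 2 ∂(μ.prod ν) := (integral_prod _ hFG.integrable_sq).symm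

theorem variance_prod_le_of_ae_variance_le (hF : MemLp F 2 (μ.prod ν)) {G : β → ℝ}
    (hFG : MemLp (fun p => F p - G p.2) 2 (μ.prod ν)) {B : α → ℝ} (hB : Integrable B μ)
    (hslice : ∀ᵐ t ∂μ, Var[fun y => F (t, y); ν] ≤ B t) :
    Var[F; μ.prod ν] ≤ ∫ t, B t ∂μ + ∫ p, (F p - G p.2) ^ 2 ∂(μ.prod ν) := by
  rw [variance_prod_eq_integral_variance_add_variance_integral hF]
  gcongr ?_ + ?_
  · exact integral_mono_of_nonneg (.of_forall fun _ => variance_nonneg _ _) hB hslice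
  · exact variance_integral_prod_le_integral_sq_sub hF hFG

end Prod

theorem variance_le_sum_integral_sq_sub_pi {n : ℕ} {X : Fin n → Type*}
    [∀ i, MeasurableSpace (X i)] (ν : ∀ i, Measure (X i)) [∀ i, IsProbabilityMeasure (ν i)]
    {f : (∀ i, X i) → ℝ} {g : Fin n → (∀ i, X i) → ℝ}
    (hg : ∀ i x t, g i (Function.update x i t) = g i x) (hf : MemLp f 2 (Measure.pi ν))
    (hfg : ∀ i, MemLp (fun x => f x - g i x) 2 (Measure.pi ν)) :
    Var[f; Measure.pi ν] ≤ ∑ i, ∫ x, (f x - g i x) ^ 2 ∂Measure.pi ν := by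
  induction n with
  | zero =>
    rw [show f = fun _ => f isEmptyElim from funext fun x => congrArg f (Subsingleton.elim _ _)]
    simp [variance_eq_integral aemeasurable_const]
  | succ n ih =>
    set e := MeasurableEquiv.piFinSuccAbove X 0
    set ν' := Measure.pi fun j => ν (Fin.succAbove 0 j)
    have he : MeasurePreserving e.symm ((ν 0).prod ν') (Measure.pi ν) :=
      (measurePreserving_piFinSuccAbove ν 0).symm
    have hF : MemLp (fun p => f (e.symm p)) 2 ((ν 0).prod ν') := hf.comp_measurePreserving he
    have hFg : ∀ i, MemLp (fun p => f (e.symm p) - g i (e.symm p)) 2 ((ν 0).prod ν') :=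
      fun i => (hfg i).comp_measurePreserving he
    have hsq i : ∫ p, (f (e.symm p) - g i (e.symm p)) ^ 2 ∂(ν 0).prod ν' =
        ∫ x, (f x - g i x) ^ 2 ∂Measure.pi ν :=
      he.integral_comp' fun x => (f x - g i x) ^ 2
    -- `g 0` ignores the first coordinate, so on the product it is a function of the second factor.
    obtain ⟨t₀⟩ := Measure.nonempty_of_neZero (ν 0)
    have hg₀ p : g 0 (e.symm (t₀, p.2)) = g 0 (e.symm p) := by
      change g 0 (Fin.insertNth 0 t₀ p.2) = g 0 (Fin.insertNth 0 p.1 p.2)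
      simpa using (hg 0 (Fin.insertNth 0 t₀ p.2) p.1).symm
    have hFg₀ : MemLp (fun p => f (e.symm p) - g 0 (e.symm (t₀, p.2))) 2 ((ν 0).prod ν') := by
      simpa only [hg₀] using hFg 0
    have hslice : ∀ᵐ t ∂ν 0, Var[fun y => f (e.symm (t, y)); ν'] ≤
        ∑ j, ∫ y, (f (e.symm (t, y)) - g (Fin.succAbove 0 j) (e.symm (t, y))) ^ 2 ∂ν' := by
      filter_upwards [hF.ae_memLp_two_prodMk_left,
        ae_all_iff.2 fun j => (hFg (Fin.succAbove 0 j)).ae_memLp_two_prodMk_left] with t hFt hFgt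
      refine ih _ (fun j y s => ?_) hFt hFgt
      change g _ (Fin.insertNth 0 t _) = g _ (Fin.insertNth 0 t y)
      rw [Fin.insertNth_update, hg]
    have hint j := (hFg (Fin.succAbove 0 j)).integrable_sq.integral_prod_left
    calc Var[f; Measure.pi ν]
        = Var[fun p => f (e.symm p); (ν 0).prod ν'] :=
          (he.variance_fun_comp hf.aestronglyMeasurable.aemeasurable).symm
      _ ≤ _ := variance_prod_le_of_ae_variance_le hF (G := fun y => g 0 (e.symm (t₀, y))) hFg₀
          (integrable_finsetSum _ fun j _ => hint j) hslice
      _ = ∑ i, ∫ x, (f x - g i x) ^ 2 ∂Measure.pi ν := by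
        rw [integral_finsetSum _ fun j _ => hint j, Fin.sum_univ_succAbove _ 0, add_comm]
        simp only [hg₀, hsq, ← integral_prod _ (hFg _).integrable_sq]

theorem variance_le_sum_integral_sq_sub_of_iIndepFun {Ω : Type*} [MeasurableSpace Ω]
    {μ : Measure Ω} [IsProbabilityMeasure μ] {n : ℕ} {X : Fin n → Type*}
    [∀ i, MeasurableSpace (X i)] {Y : ∀ i, Ω → X i} (hY : ∀ i, Measurable (Y i))
    (hindep : iIndepFun Y μ) {f : (∀ i, X i) → ℝ} {g : Fin n → (∀ i, X i) → ℝ}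
    (hfm : Measurable f) (hgm : ∀ i, Measurable (g i))
    (hg : ∀ i x t, g i (Function.update x i t) = g i x)
    (hf : MemLp (fun ω => f (fun i => Y i ω)) 2 μ)
    (hfg : ∀ i, MemLp (fun ω => f (fun i => Y i ω) - g i (fun i => Y i ω)) 2 μ) :
    Var[fun ω => f (fun i => Y i ω); μ] ≤
      ∑ i, ∫ ω, (f (fun i => Y i ω) - g i (fun i => Y i ω)) ^ 2 ∂μ := by
  have := fun i => Measure.isProbabilityMeasure_map (μ := μ) (hY i).aemeasurable
  have hlaw : MeasurePreserving (fun ω i => Y i ω) μ (Measure.pi fun i => μ.map (Y i)) :=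
    ⟨measurable_pi_lambda _ hY, hindep.map_fun_eq_pi_map fun i => (hY i).aemeasurable⟩
  rw [hlaw.variance_fun_comp hfm.aemeasurable]
  refine (variance_le_sum_integral_sq_sub_pi _ hg ?_ fun i => ?_).trans_eq ?_
  · rwa [← hlaw.map_eq, memLp_map_measure_iff hfm.aestronglyMeasurable hlaw.aemeasurable]
  · have hm : Measurable fun x => f x - g i x := hfm.sub (hgm i)
    rw [← hlaw.map_eq, memLp_map_measure_iff hm.aestronglyMeasurable hlaw.aemeasurable]
    exact hfg i
  · refine Finset.sum_congr rfl fun i _ => ?_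
    have hm : Measurable fun x => (f x - g i x) ^ 2 := (hfm.sub (hgm i)).pow_const 2
    rw [← hlaw.map_eq, integral_map hlaw.aemeasurable hm.aestronglyMeasurable]

lemma sum_sq_sup'_sub_sup'_erase_le {ι : Type*} [Fintype ι] [DecidableEq ι] (x : ι → ℝ)
    (hne : (Finset.univ : Finset ι).Nonempty) (hee : ∀ i, (Finset.univ.erase i).Nonempty) :
    ∑ i, (Finset.univ.sup' hne x - (Finset.univ.erase i).sup' (hee i) x) ^ 2 ≤
      (Finset.univ.sup' hne x -
        Finset.univ.inf' hne fun i => (Finset.univ.erase i).sup' (hee i) x) ^ 2 := by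
  obtain ⟨i₀, -, hi₀⟩ := Finset.exists_mem_eq_sup' hne x
  have herase : ∀ i, (Finset.univ.erase i).sup' (hee i) x ≤ Finset.univ.sup' hne x := fun i =>
    Finset.sup'_mono x (Finset.erase_subset i _) (hee i)
  rw [Finset.sum_eq_single i₀ (fun i _ hi => ?_) (by simp)]
  · refine pow_le_pow_left₀ (sub_nonneg.2 (herase i₀)) ?_ 2
    exact sub_le_sub_left
      (Finset.inf'_le (fun i => (Finset.univ.erase i).sup' (hee i) x) (Finset.mem_univ i₀)) _
  · have : Finset.univ.sup' hne x ≤ (Finset.univ.erase i).sup' (hee i) x :=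
      hi₀ ▸ Finset.le_sup' x (Finset.mem_erase.2 ⟨Ne.symm hi, Finset.mem_univ i₀⟩)
    simp [le_antisymm (herase i) this]

theorem variance_sup'_le_integral_sq_sub_inf'_sup'_erase {Ω : Type*} [MeasurableSpace Ω]
    {μ : Measure Ω} [IsProbabilityMeasure μ] {n : ℕ} {Y : Fin n → Ω → ℝ}
    (hY : ∀ i, Measurable (Y i)) (hindep : iIndepFun Y μ)
    (hne : (Finset.univ : Finset (Fin n)).Nonempty) (hee : ∀ i, (Finset.univ.erase i).Nonempty)
    (hM : MemLp (fun ω => Finset.univ.sup' hne fun i => Y i ω) 2 μ)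
    (hgap : MemLp (fun ω => (Finset.univ.sup' hne fun i => Y i ω) -
      Finset.univ.inf' hne fun i => (Finset.univ.erase i).sup' (hee i) fun j => Y j ω) 2 μ) :
    Var[fun ω => Finset.univ.sup' hne fun i => Y i ω; μ] ≤
      ∫ ω, ((Finset.univ.sup' hne fun i => Y i ω) -
        Finset.univ.inf' hne fun i => (Finset.univ.erase i).sup' (hee i) fun j => Y j ω) ^ 2
        ∂μ := by
  have hY' : Measurable fun ω i => Y i ω := measurable_pi_lambda _ hY
  have hfm : Measurable fun x : Fin n → ℝ => Finset.univ.sup' hne x := by fun_prop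
  have hgm : ∀ i, Measurable fun x : Fin n → ℝ => (Finset.univ.erase i).sup' (hee i) x :=
    fun i => by fun_prop
  have hsum ω := sum_sq_sup'_sub_sup'_erase_le (fun i => Y i ω) hne hee
  have hgapᵢ : ∀ i, MemLp (fun ω => (Finset.univ.sup' hne fun i => Y i ω) -
      (Finset.univ.erase i).sup' (hee i) fun j => Y j ω) 2 μ := fun i =>
    hgap.of_le ((hfm.sub (hgm i)).comp hY').aestronglyMeasurable <| .of_forall fun ω => by
      rw [Real.norm_eq_abs, Real.norm_eq_abs, ← sq_le_sq]
      exact (Finset.single_le_sum (f := fun i => ((Finset.univ.sup' hne fun i => Y i ω) -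
        (Finset.univ.erase i).sup' (hee i) fun j => Y j ω) ^ 2) (fun j _ => sq_nonneg _)
        (Finset.mem_univ i)).trans (hsum ω)
  refine (variance_le_sum_integral_sq_sub_of_iIndepFun hY hindep hfm hgm
    (fun i x t => Finset.sup'_congr _ rfl fun j hj =>
      Function.update_of_ne (Finset.ne_of_mem_erase hj) t x) hM hgapᵢ).trans ?_
  rw [← integral_finsetSum _ fun i _ => (hgapᵢ i).integrable_sq]
  exact integral_mono (integrable_finsetSum _ fun i _ => (hgapᵢ i).integrable_sq)
    hgap.integrable_sq hsum

/-- Let `Y_1, …, Y_n` (`n ≥ 2`) be i.i.d. square-integrable real random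
variables with largest and second largest order statistics `M = Y_{n,n}` and
`M2 = Y_{n-1,n}`. Then `E[M²] ≤ (E[M])² + E[(M - M2)²]`. -/
theorem stmt9 {Ω : Type*} [MeasureSpace Ω] [IsProbabilityMeasure (ℙ : Measure Ω)]
    (n : ℕ) (hn : 2 ≤ n) (Y : Fin n → Ω → ℝ)
    (hmeas : ∀ i, Measurable (Y i))
    (hindep : iIndepFun Y ℙ)
    (M M2 : Ω → ℝ)
    (hM : ∀ ω, M ω = ⨆ i, Y i ω)
    (hM2 : ∀ ω, M2 ω =
      Finset.univ.inf'
        (Finset.univ_nonempty_iff.mpr (Fin.pos_iff_nonempty.mp (by omega)))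
        (fun i => (Finset.univ.erase i).sup'
          (Finset.card_pos.mp (by
            rw [Finset.card_erase_of_mem (Finset.mem_univ i), Finset.card_univ,
              Fintype.card_fin]
            omega))
          (fun j => Y j ω)))
    (hM2int : Integrable (fun ω => M ω ^ 2) ℙ)
    (hdiffint : Integrable (fun ω => (M ω - M2 ω) ^ 2) ℙ) :
    ∫ ω, M ω ^ 2 ∂ℙ ≤ (∫ ω, M ω ∂ℙ) ^ 2 + ∫ ω, (M ω - M2 ω) ^ 2 ∂ℙ := by
  have : Nonempty (Fin n) := ⟨⟨0, by omega⟩⟩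
  have hM' ω : M ω = Finset.univ.sup' Finset.univ_nonempty fun i => Y i ω :=
    (hM ω).trans (Finset.sup'_univ_eq_ciSup _).symm
  have hMm : Measurable M := by rw [funext hM']; fun_prop
  have hM2m : Measurable M2 := by rw [funext hM2]; fun_prop
  have hMLp : MemLp M 2 ℙ := (memLp_two_iff_integrable_sq hMm.aestronglyMeasurable).2 hM2int
  have hgapLp : MemLp (fun ω => M ω - M2 ω) 2 ℙ :=
    (memLp_two_iff_integrable_sq (hMm.sub hM2m).aestronglyMeasurable).2 hdiffint
  have hee (i : Fin n) : (Finset.univ.erase i).Nonempty :=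
    (Finset.univ_nontrivial_iff.2 (Fin.nontrivial_iff_two_le.2 hn)).erase_nonempty
  have hvar := variance_sup'_le_integral_sq_sub_inf'_sup'_erase hmeas hindep
    Finset.univ_nonempty hee (funext hM' ▸ hMLp) (by simpa only [hM', hM2] using hgapLp)
  simp only [← hM', ← hM2] at hvar
  rw [variance_eq_sub hMLp] at hvar
  simp only [Pi.pow_apply] at hvar
  linarith
end

section
/- Let X_1,…,X_n be independent random variables and Z = f(X_1,…,X_n) square-integrable, and for each i let Z_i be a square-integrable function of (X_j)_{j≠i}. Then Var(Z) ≤ Σ_{i=1}^n E[(Z − Z_i)²]. -/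
/-!
Let `g k` be the conditional expectation of `Z` given the first `k` coordinates; on a product
space it is obtained by integrating out the remaining ones. The increments `g (k + 1) - g k` are
orthogonal, so `Var Z = ∑ₖ E[(g (k + 1) - g k)²]`. Integrating out coordinates in two steps is
the same as integrating them out at once (Fubini), so `g (k + 1) - g k` is the conditional
expectation of `Z - E⁽ᵏ⁾ Z` given the first `k + 1` coordinates, and by Jensen
`E[(g (k + 1) - g k)²] ≤ E[(Z - E⁽ᵏ⁾ Z)²]`. Finally `E⁽ᵏ⁾ Z` is the best `L²` approximation of
`Z` by functions of the other coordinates: slice by slice, the mean minimizes the mean square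
deviation. This bounds the last term by `E[(Z - Z_k)²]`.
-/

open MeasureTheory ProbabilityTheory Finset

section

variable {Ω : Type*} [MeasurableSpace Ω] {m : Measure Ω} [IsProbabilityMeasure m] {h : Ω → ℝ}

lemma sq_integral_le_integral_sq_s11 (hh : MemLp h 2 m) : (∫ ω, h ω ∂m) ^ 2 ≤ ∫ ω, h ω ^ 2 ∂m := by
  have := variance_nonneg h m
  rwa [variance_eq_sub hh, sub_nonneg] at this

lemma integral_sq_sub_integral_le (hh : AEStronglyMeasurable h m) (c : ℝ) :
    ∫ ω, (h ω - ∫ ω', h ω' ∂m) ^ 2 ∂m ≤ ∫ ω, (h ω - c) ^ 2 ∂m := by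
  rw [← variance_eq_integral hh.aemeasurable, ← variance_sub_const hh c]
  exact variance_le_expectation_sq (hh.sub aestronglyMeasurable_const)

end

namespace EfronStein

variable {ι : Type*} [DecidableEq ι] {α : ι → Type*}

lemma piecewise_piecewise_piecewise (s t : Finset ι) (x y z : ∀ i, α i) :
    t.piecewise z (s.piecewise y x) = (s ∪ t).piecewise (t.piecewise z y) x := by
  ext i
  by_cases hs : i ∈ s <;> by_cases ht : i ∈ t <;> simp [hs, ht]

variable [∀ i, MeasurableSpace (α i)]

lemma measurable_piecewise_prod (s : Finset ι) :
    Measurable fun q : (∀ i, α i) × (∀ i, α i) => s.piecewise q.2 q.1 :=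
  measurable_pi_lambda _ fun i => by
    by_cases hi : i ∈ s
    · simpa only [Finset.piecewise, hi, if_true] using measurable_snd.eval
    · simpa only [Finset.piecewise, hi, if_false] using measurable_fst.eval

variable [Fintype ι] (μ : ∀ i, Measure (α i))

/-- The Bochner analogue of `MeasureTheory.lmarginal`: the conditional expectation given the
coordinates outside `s`. In particular `marginal μ {i} f` is the paper's `E⁽ⁱ⁾ f`. -/
noncomputable def marginal (s : Finset ι) (f : (∀ i, α i) → ℝ) (x : ∀ i, α i) : ℝ :=
  ∫ y, f (s.piecewise y x) ∂Measure.pi μ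

variable {μ}

lemma marginal_piecewise_of_subset {s t : Finset ι} (hts : t ⊆ s) (f : (∀ i, α i) → ℝ)
    (x y : ∀ i, α i) : marginal μ s f (t.piecewise y x) = marginal μ s f x := by
  simp only [marginal, piecewise_piecewise_of_subset_right hts]

lemma marginal_univ (f : (∀ i, α i) → ℝ) (x : ∀ i, α i) :
    marginal μ univ f x = ∫ y, f y ∂Measure.pi μ := by
  simp [marginal]

lemma marginal_mul_of_invariant (s : Finset ι) {g : (∀ i, α i) → ℝ}
    (hg : ∀ x y, g (s.piecewise y x) = g x) (f : (∀ i, α i) → ℝ) (x : ∀ i, α i) :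
    marginal μ s (g * f) x = g x * marginal μ s f x := by
  simp only [marginal, Pi.mul_apply, hg, integral_const_mul]

variable [∀ i, IsProbabilityMeasure (μ i)]

lemma measurePreserving_piecewise_prod (s : Finset ι) :
    MeasurePreserving (fun q : (∀ i, α i) × (∀ i, α i) => s.piecewise q.2 q.1)
      ((Measure.pi μ).prod (Measure.pi μ)) (Measure.pi μ) := by
  refine ⟨measurable_piecewise_prod s, (Measure.pi_eq fun t ht => ?_).symm⟩
  have hpre : (fun q : (∀ i, α i) × (∀ i, α i) => s.piecewise q.2 q.1) ⁻¹' Set.univ.pi t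
      = Set.univ.pi (fun i => if i ∈ s then Set.univ else t i)
          ×ˢ Set.univ.pi (fun i => if i ∈ s then t i else Set.univ) := by
    ext q
    simp only [Set.mem_preimage, Set.mem_pi, Set.mem_univ, true_implies, Set.mem_prod,
      Finset.piecewise, ← forall_and]
    refine forall_congr' fun i => ?_
    by_cases hi : i ∈ s <;> simp [hi]
  rw [Measure.map_apply (measurable_piecewise_prod s) (.univ_pi ht), hpre, Measure.prod_prod,
    Measure.pi_pi, Measure.pi_pi, ← Finset.prod_mul_distrib]
  refine Finset.prod_congr rfl fun i _ => ?_
  by_cases hi : i ∈ s <;> simp [hi]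

lemma marginal_empty (f : (∀ i, α i) → ℝ) : marginal μ ∅ f = f := by
  ext x
  simp [marginal]

lemma integral_marginal (s : Finset ι) {f : (∀ i, α i) → ℝ} (hf : Integrable f (Measure.pi μ)) :
    ∫ x, marginal μ s f x ∂Measure.pi μ = ∫ x, f x ∂Measure.pi μ := by
  have hmp := measurePreserving_piecewise_prod (μ := μ) s
  simp only [marginal]
  rw [integral_integral (f := fun x y => f (s.piecewise y x))
    (hmp.integrable_comp_of_integrable hf), ← integral_map hmp.measurable.aemeasurable
    (by rw [hmp.map_eq]; exact hf.aestronglyMeasurable), hmp.map_eq]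

lemma integrable_marginal (s : Finset ι) {f : (∀ i, α i) → ℝ}
    (hf : Integrable f (Measure.pi μ)) : Integrable (marginal μ s f) (Measure.pi μ) :=
  ((measurePreserving_piecewise_prod (μ := μ) s).integrable_comp_of_integrable
    hf).integral_prod_left

lemma ae_integrable_piecewise (s : Finset ι) {f : (∀ i, α i) → ℝ}
    (hf : Integrable f (Measure.pi μ)) :
    ∀ᵐ x ∂Measure.pi μ, Integrable (fun y => f (s.piecewise y x)) (Measure.pi μ) :=
  ((measurePreserving_piecewise_prod (μ := μ) s).integrable_comp_of_integrable hf).prod_right_ae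

lemma aestronglyMeasurable_marginal (s : Finset ι) {f : (∀ i, α i) → ℝ}
    (hf : AEStronglyMeasurable f (Measure.pi μ)) :
    AEStronglyMeasurable (marginal μ s f) (Measure.pi μ) :=
  (hf.comp_measurePreserving (measurePreserving_piecewise_prod (μ := μ) s)).integral_prod_right'

lemma ae_aestronglyMeasurable_piecewise (s : Finset ι) {f : (∀ i, α i) → ℝ}
    (hf : AEStronglyMeasurable f (Measure.pi μ)) :
    ∀ᵐ x ∂Measure.pi μ, AEStronglyMeasurable (fun y => f (s.piecewise y x)) (Measure.pi μ) :=
  (hf.comp_measurePreserving (measurePreserving_piecewise_prod (μ := μ) s)).prodMk_left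

lemma ae_memLp_piecewise (s : Finset ι) {f : (∀ i, α i) → ℝ} (hf : MemLp f 2 (Measure.pi μ)) :
    ∀ᵐ x ∂Measure.pi μ, MemLp (fun y => f (s.piecewise y x)) 2 (Measure.pi μ) := by
  filter_upwards [ae_aestronglyMeasurable_piecewise s hf.aestronglyMeasurable,
    ae_integrable_piecewise s hf.integrable_sq] with x hxm hxi
  exact (memLp_two_iff_integrable_sq hxm).2 hxi

lemma marginal_sub (s : Finset ι) {f g : (∀ i, α i) → ℝ} (hf : Integrable f (Measure.pi μ))
    (hg : Integrable g (Measure.pi μ)) :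
    marginal μ s (f - g) =ᵐ[Measure.pi μ] marginal μ s f - marginal μ s g := by
  filter_upwards [ae_integrable_piecewise s hf, ae_integrable_piecewise s hg] with x hfx hgx
  exact integral_sub hfx hgx

lemma marginal_marginal (s t : Finset ι) {f : (∀ i, α i) → ℝ}
    (hf : Integrable f (Measure.pi μ)) :
    marginal μ s (marginal μ t f) =ᵐ[Measure.pi μ] marginal μ (s ∪ t) f := by
  filter_upwards [ae_integrable_piecewise (s ∪ t) hf] with x hx
  simp only [marginal, piecewise_piecewise_piecewise s t]
  exact integral_marginal t (f := fun w => f ((s ∪ t).piecewise w x)) hx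

lemma sq_marginal_le (s : Finset ι) {f : (∀ i, α i) → ℝ} (hf : MemLp f 2 (Measure.pi μ)) :
    ∀ᵐ x ∂Measure.pi μ, marginal μ s f x ^ 2 ≤ marginal μ s (fun w => f w ^ 2) x := by
  filter_upwards [ae_memLp_piecewise s hf] with x hx
  exact sq_integral_le_integral_sq_s11 hx

lemma memLp_marginal (s : Finset ι) {f : (∀ i, α i) → ℝ} (hf : MemLp f 2 (Measure.pi μ)) :
    MemLp (marginal μ s f) 2 (Measure.pi μ) := by
  have hm := aestronglyMeasurable_marginal s hf.aestronglyMeasurable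
  refine (memLp_two_iff_integrable_sq hm).2 <|
    (integrable_marginal s hf.integrable_sq).mono' (hm.pow 2) ?_
  filter_upwards [sq_marginal_le s hf] with x hx
  rwa [Real.norm_eq_abs, abs_of_nonneg (sq_nonneg _)]

lemma integral_sq_marginal_le (s : Finset ι) {f : (∀ i, α i) → ℝ}
    (hf : MemLp f 2 (Measure.pi μ)) :
    ∫ x, marginal μ s f x ^ 2 ∂Measure.pi μ ≤ ∫ x, f x ^ 2 ∂Measure.pi μ := by
  rw [← integral_marginal s hf.integrable_sq]
  exact integral_mono_ae (memLp_marginal s hf).integrable_sq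
    (integrable_marginal s hf.integrable_sq) (sq_marginal_le s hf)

lemma integral_mul_marginal (s : Finset ι) {f g : (∀ i, α i) → ℝ}
    (hg : ∀ x y, g (s.piecewise y x) = g x) (hgf : Integrable (g * f) (Measure.pi μ)) :
    ∫ x, g x * f x ∂Measure.pi μ = ∫ x, g x * marginal μ s f x ∂Measure.pi μ := by
  calc ∫ x, g x * f x ∂Measure.pi μ = ∫ x, marginal μ s (g * f) x ∂Measure.pi μ :=
        (integral_marginal s hgf).symm
    _ = ∫ x, g x * marginal μ s f x ∂Measure.pi μ := by
        simp only [marginal_mul_of_invariant s hg]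

lemma integral_sq_marginal_sub_marginal {s t : Finset ι} (hts : t ⊆ s) {f : (∀ i, α i) → ℝ}
    (hf : MemLp f 2 (Measure.pi μ)) :
    ∫ x, (marginal μ t f x - marginal μ s f x) ^ 2 ∂Measure.pi μ
      = ∫ x, marginal μ t f x ^ 2 ∂Measure.pi μ - ∫ x, marginal μ s f x ^ 2 ∂Measure.pi μ := by
  set a := marginal μ t f
  set b := marginal μ s f
  have ha := memLp_marginal t hf
  have hb := memLp_marginal s hf
  have hba : Integrable (fun x => b x * a x) (Measure.pi μ) := hb.integrable_mul ha
  have hcross : ∫ x, b x * a x ∂Measure.pi μ = ∫ x, b x ^ 2 ∂Measure.pi μ := by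
    rw [integral_mul_marginal s (marginal_piecewise_of_subset subset_rfl f) hba]
    refine integral_congr_ae ?_
    filter_upwards [marginal_marginal s t (hf.integrable one_le_two)] with x hx
    rw [hx, union_eq_left.2 hts, sq]
  have hdiff : Integrable (fun x => (a x - b x) ^ 2) (Measure.pi μ) := (ha.sub hb).integrable_sq
  have hexp : ∫ x, ((a x - b x) ^ 2 + 2 * (b x * a x)) ∂Measure.pi μ
      = ∫ x, (a x ^ 2 + b x ^ 2) ∂Measure.pi μ :=
    integral_congr_ae (.of_forall fun x => by ring)
  rw [integral_add hdiff (hba.const_mul 2), integral_add ha.integrable_sq hb.integrable_sq,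
    integral_const_mul, hcross] at hexp
  linarith

lemma integral_sq_marginal_sub_marginal_union_le (t u : Finset ι) {f : (∀ i, α i) → ℝ}
    (hf : MemLp f 2 (Measure.pi μ)) :
    ∫ x, (marginal μ t f x - marginal μ (t ∪ u) f x) ^ 2 ∂Measure.pi μ
      ≤ ∫ x, (f x - marginal μ u f x) ^ 2 ∂Measure.pi μ := by
  have hfi := hf.integrable one_le_two
  have hsplit : (fun x => marginal μ t f x - marginal μ (t ∪ u) f x)
      =ᵐ[Measure.pi μ] marginal μ t (f - marginal μ u f) := by
    filter_upwards [marginal_sub t hfi (integrable_marginal u hfi),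
      marginal_marginal t u hfi] with x hsub htower
    rw [hsub, Pi.sub_apply, htower]
  calc ∫ x, (marginal μ t f x - marginal μ (t ∪ u) f x) ^ 2 ∂Measure.pi μ
      = ∫ x, marginal μ t (f - marginal μ u f) x ^ 2 ∂Measure.pi μ :=
        integral_congr_ae (hsplit.fun_comp (· ^ 2))
    _ ≤ ∫ x, (f x - marginal μ u f x) ^ 2 ∂Measure.pi μ :=
        integral_sq_marginal_le t (hf.sub (memLp_marginal u hf))

lemma integral_sq_sub_marginal_le (s : Finset ι) {f g : (∀ i, α i) → ℝ}
    (hf : MemLp f 2 (Measure.pi μ)) (hg : MemLp g 2 (Measure.pi μ))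
    (hg_inv : ∀ x y, g (s.piecewise y x) = g x) :
    ∫ x, (f x - marginal μ s f x) ^ 2 ∂Measure.pi μ ≤ ∫ x, (f x - g x) ^ 2 ∂Measure.pi μ := by
  have h₁ : Integrable (fun x => (f x - marginal μ s f x) ^ 2) (Measure.pi μ) :=
    (hf.sub (memLp_marginal s hf)).integrable_sq
  have h₂ : Integrable (fun x => (f x - g x) ^ 2) (Measure.pi μ) := (hf.sub hg).integrable_sq
  rw [← integral_marginal s h₁, ← integral_marginal s h₂]
  refine integral_mono_ae (integrable_marginal s h₁) (integrable_marginal s h₂) ?_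
  filter_upwards [ae_aestronglyMeasurable_piecewise s hf.aestronglyMeasurable] with x hx
  simp only [marginal, piecewise_idem_right, hg_inv]
  exact integral_sq_sub_integral_le hx (g x)

def tail (n k : ℕ) : Finset (Fin n) := {j | k ≤ (j : ℕ)}

lemma tail_zero (n : ℕ) : tail n 0 = univ := by
  ext j
  simp [tail]

lemma tail_self (n : ℕ) : tail n n = ∅ := by
  ext j
  simp [tail, j.isLt]

lemma tail_succ_subset (n k : ℕ) : tail n (k + 1) ⊆ tail n k := by
  intro j
  simp only [tail, mem_filter, mem_univ, true_and]
  omega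

lemma tail_eq_tail_succ_union {n : ℕ} (i : Fin n) : tail n i = tail n (i + 1) ∪ {i} := by
  ext j
  simp only [tail, mem_union, mem_filter, mem_univ, true_and, mem_singleton, Fin.ext_iff]
  omega

/-- The increments of the Doob martingale `k ↦ marginal μ (tail n k) f` are orthogonal. -/
lemma variance_eq_sum_integral_sq_marginal_sub {n : ℕ} {α : Fin n → Type*}
    [∀ i, MeasurableSpace (α i)] {μ : ∀ i, Measure (α i)} [∀ i, IsProbabilityMeasure (μ i)]
    {f : (∀ i, α i) → ℝ} (hf : MemLp f 2 (Measure.pi μ)) :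
    variance f (Measure.pi μ) = ∑ i : Fin n,
      ∫ x, (marginal μ (tail n (i + 1)) f x - marginal μ (tail n i) f x) ^ 2 ∂Measure.pi μ := by
  rw [Fin.sum_univ_eq_sum_range (fun k =>
    ∫ x, (marginal μ (tail n (k + 1)) f x - marginal μ (tail n k) f x) ^ 2 ∂Measure.pi μ)]
  simp only [integral_sq_marginal_sub_marginal (tail_succ_subset n _) hf]
  rw [sum_range_sub (fun k => ∫ x, marginal μ (tail n k) f x ^ 2 ∂Measure.pi μ), tail_self,
    tail_zero, marginal_empty, variance_eq_sub hf]
  simp [marginal_univ]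

end EfronStein

open EfronStein in
theorem stmt11_general (n : ℕ) (μ : Fin n → Measure ℝ) [∀ i, IsProbabilityMeasure (μ i)]
    (Z : (Fin n → ℝ) → ℝ) (Zi : Fin n → (Fin n → ℝ) → ℝ)
    (hZ2 : MemLp Z 2 (Measure.pi μ))
    (hZi2 : ∀ i, MemLp (Zi i) 2 (Measure.pi μ))
    (hZi_indep : ∀ i (x y : Fin n → ℝ), (∀ j, j ≠ i → x j = y j) → Zi i x = Zi i y) :
    variance Z (Measure.pi μ)
      ≤ ∑ i, ∫ x, (Z x - Zi i x) ^ 2 ∂(Measure.pi μ) := by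
  have hZi_inv : ∀ i x y, Zi i (({i} : Finset (Fin n)).piecewise y x) = Zi i x := fun i x y =>
    hZi_indep i _ _ fun j hj => piecewise_eq_of_notMem _ _ _ (by simpa using hj)
  calc variance Z (Measure.pi μ)
      = ∑ i : Fin n, ∫ x, (marginal μ (tail n (i + 1)) Z x - marginal μ (tail n i) Z x) ^ 2
          ∂Measure.pi μ := variance_eq_sum_integral_sq_marginal_sub hZ2
    _ ≤ ∑ i, ∫ x, (Z x - marginal μ {i} Z x) ^ 2 ∂Measure.pi μ := sum_le_sum fun i _ => by
        rw [tail_eq_tail_succ_union i]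
        exact integral_sq_marginal_sub_marginal_union_le _ _ hZ2
    _ ≤ ∑ i, ∫ x, (Z x - Zi i x) ^ 2 ∂Measure.pi μ :=
        sum_le_sum fun i _ => integral_sq_sub_marginal_le _ hZ2 (hZi2 i) (hZi_inv i)

/-- **Efron–Stein / sub-additivity of variance.** Let `X_1, …, X_n` be
independent random variables (modelled by a product probability measure on `Fin n → ℝ`),
let `Z` be a square-integrable function of `(X_1, …, X_n)`, and for each `i` let `Z_i`
be a square-integrable function not depending on the `i`-th coordinate. Then
`Var(Z) ≤ ∑_i E[(Z - Z_i)²]`. -/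
theorem stmt11 (n : ℕ) (μ : Fin n → Measure ℝ) [∀ i, IsProbabilityMeasure (μ i)]
    (Z : (Fin n → ℝ) → ℝ) (Zi : Fin n → (Fin n → ℝ) → ℝ)
    (hZmeas : Measurable Z) (hZimeas : ∀ i, Measurable (Zi i))
    (hZ2 : MemLp Z 2 (Measure.pi μ))
    (hZi2 : ∀ i, MemLp (Zi i) 2 (Measure.pi μ))
    (hZi_indep : ∀ i (x y : Fin n → ℝ), (∀ j, j ≠ i → x j = y j) → Zi i x = Zi i y) :
    variance Z (Measure.pi μ)
      ≤ ∑ i, ∫ x, (Z x - Zi i x) ^ 2 ∂(Measure.pi μ) :=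
  stmt11_general n μ Z Zi hZ2 hZi2 hZi_indep
end

section
/- Let X_1,…,X_n be i.i.d. from a distribution in the sub-exponential envelope class Λ(α,β,γ) with α ≥ 1, β > 0, γ > 1, and M_n = max(X_1,…,X_n). Then E[M_n] ≤ β(ln(κγen))^{1/α}, where κ = 1/(1 − exp(−α/β^α)). -/
/-!
A union bound over the `n` coordinates gives `P(M > v) ≤ κγn · exp(-(v/β)^α)`; the factor `κ`
is the geometric series produced by the convexity estimate
`((k + j)/β)^α ≥ (k/β)^α + jα/β^α` for `k ≥ 1`. By the layer-cake formula this tail yields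
`E[(M/β)^α] ≤ ∫₀^∞ min(1, κγn e^{-t}) dt = ln(κγn) + 1`, and since `α ≥ 1`,
`E[M/β] ≤ E[(M/β)^α]^{1/α}`.
-/

open MeasureTheory ProbabilityTheory Real

theorem rpow_add_mul_le_add_rpow {x y α : ℝ} (hx : 1 ≤ x) (hy : 0 ≤ y) (hα : 1 ≤ α) :
    x ^ α + α * y ≤ (x + y) ^ α := by
  have hx0 : 0 < x := by linarith
  have hbern : 1 + α * (y / x) ≤ (1 + y / x) ^ α :=
    one_add_mul_self_le_rpow_one_add (by linarith [div_nonneg hy hx0.le]) hα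
  have hxα : x ≤ x ^ α := by
    simpa using rpow_le_rpow_of_exponent_le hx hα
  calc x ^ α + α * y ≤ x ^ α + α * y * (x ^ α / x) := by
        have hαy : 0 ≤ α * y := by nlinarith
        linarith [le_mul_of_one_le_right hαy ((one_le_div hx0).mpr hxα)]
    _ = x ^ α * (1 + α * (y / x)) := by field_simp
    _ ≤ x ^ α * (1 + y / x) ^ α := by gcongr
    _ = (x + y) ^ α := by
        rw [← mul_rpow hx0.le (by positivity)]
        congr 1
        field_simp

theorem exp_neg_div_rpow_add_le {α β x : ℝ} (hα : 1 ≤ α) (hβ : 0 < β) (hx : 1 ≤ x) (j : ℕ) :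
    exp (-((x + j) / β) ^ α) ≤ exp (-(x / β) ^ α) * exp (-(α / β ^ α)) ^ j := by
  have key : (x / β) ^ α + j * (α / β ^ α) ≤ ((x + j) / β) ^ α := by
    rw [div_rpow (by linarith) hβ.le, div_rpow (by positivity) hβ.le, mul_div_assoc', ← add_div,
      mul_comm]
    gcongr
    exact rpow_add_mul_le_add_rpow hx j.cast_nonneg hα
  rw [← exp_nat_mul, ← exp_add, exp_le_exp]
  linarith

theorem exp_neg_div_rpow_lt_one {α β : ℝ} (hα : 0 < α) (hβ : 0 < β) : exp (-(α / β ^ α)) < 1 := by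
  rw [exp_lt_one_iff, neg_lt_zero]
  positivity

theorem measure_lt_le_of_envelope {Ω : Type*} [MeasurableSpace Ω] {μ : Measure Ω} {Y : Ω → ℕ}
    {α β γ : ℝ} (hα : 1 ≤ α) (hβ : 0 < β) (hγ : 0 ≤ γ)
    (henv : ∀ k : ℕ, 1 ≤ k → μ {ω | Y ω = k} ≤ ENNReal.ofReal (γ * exp (-((k : ℝ) / β) ^ α)))
    {v : ℝ} (hv : 0 ≤ v) :
    μ {ω | v < Y ω} ≤
      ENNReal.ofReal (γ * (1 - exp (-(α / β ^ α)))⁻¹ * exp (-(v / β) ^ α)) := by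
  set r := exp (-(α / β ^ α))
  have hr1 : r < 1 := exp_neg_div_rpow_lt_one (by linarith) hβ
  set k₀ := ⌊v⌋₊ + 1
  have hvk₀ : v < k₀ := by simpa [k₀] using Nat.lt_floor_add_one v
  have hset : {ω | v < Y ω} = ⋃ j : ℕ, {ω | Y ω = k₀ + j} := by
    ext ω
    simp only [Set.mem_ofPred_eq, Set.mem_iUnion, ← Nat.floor_lt hv]
    exact ⟨fun h => ⟨Y ω - k₀, by omega⟩, fun ⟨j, h⟩ => by omega⟩
  have hterm (j : ℕ) : μ {ω | Y ω = k₀ + j} ≤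
      ENNReal.ofReal (γ * exp (-(k₀ / β) ^ α)) * ENNReal.ofReal r ^ j := by
    refine (henv _ (by omega)).trans ?_
    rw [← ENNReal.ofReal_pow (exp_pos _).le, ← ENNReal.ofReal_mul (by positivity), mul_assoc]
    gcongr
    exact_mod_cast exp_neg_div_rpow_add_le hα hβ (x := k₀) (by simp [k₀]) j
  calc μ {ω | v < Y ω} ≤ ∑' j : ℕ, μ {ω | Y ω = k₀ + j} := hset ▸ measure_iUnion_le _
    _ ≤ ∑' j : ℕ, ENNReal.ofReal (γ * exp (-(k₀ / β) ^ α)) * ENNReal.ofReal r ^ j :=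
        ENNReal.tsum_le_tsum hterm
    _ = ENNReal.ofReal (γ * exp (-(k₀ / β) ^ α)) * (1 - ENNReal.ofReal r)⁻¹ := by
        rw [ENNReal.tsum_mul_left, ENNReal.tsum_geometric]
    _ = ENNReal.ofReal (γ * (1 - r)⁻¹ * exp (-(k₀ / β) ^ α)) := by
        rw [← ENNReal.ofReal_one, ← ENNReal.ofReal_sub _ (exp_pos _).le,
          ← ENNReal.ofReal_inv_of_pos (by linarith), ← ENNReal.ofReal_mul (by positivity),
          mul_right_comm]
    _ ≤ ENNReal.ofReal (γ * (1 - r)⁻¹ * exp (-(v / β) ^ α)) := by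
        have : 0 < (1 - r)⁻¹ := inv_pos.mpr (by linarith)
        gcongr

theorem measure_lt_ciSup_le_sum {Ω ι : Type*} [MeasurableSpace Ω] [Fintype ι] [Nonempty ι]
    (μ : Measure Ω) (f : ι → Ω → ℝ) (v : ℝ) :
    μ {ω | v < ⨆ i, f i ω} ≤ ∑ i, μ {ω | v < f i ω} := by
  have hset : {ω | v < ⨆ i, f i ω} = ⋃ i, {ω | v < f i ω} := by
    ext ω
    simp [lt_ciSup_iff (Set.finite_range _).bddAbove]
  rw [hset]
  exact measure_iUnion_fintype_le _ _

theorem setLIntegral_Ioi_min_one_exp_neg_le {C : ℝ} (hC : 1 ≤ C) :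
    ∫⁻ t in Set.Ioi (0 : ℝ), min 1 (ENNReal.ofReal (C * exp (-t))) ≤
      ENNReal.ofReal (log C + 1) := by
  have hC0 : 0 < C := by linarith
  have hlog : 0 ≤ log C := log_nonneg hC
  have hint : IntegrableOn (fun t => C * exp (-t)) (Set.Ioi (log C)) := by
    simpa [IntegrableOn] using (exp_neg_integrableOn_Ioi (log C) one_pos).const_mul C
  rw [← Set.Ioc_union_Ioi_eq_Ioi hlog,
    lintegral_union measurableSet_Ioi (Set.Ioc_disjoint_Ioi le_rfl),
    ENNReal.ofReal_add hlog zero_le_one, ENNReal.ofReal_one]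
  gcongr
  · calc ∫⁻ t in Set.Ioc 0 (log C), min 1 (ENNReal.ofReal (C * exp (-t)))
        ≤ ∫⁻ _ in Set.Ioc 0 (log C), 1 := lintegral_mono fun t => min_le_left _ _
      _ = ENNReal.ofReal (log C) := by simp
  · calc ∫⁻ t in Set.Ioi (log C), min 1 (ENNReal.ofReal (C * exp (-t)))
        ≤ ∫⁻ t in Set.Ioi (log C), ENNReal.ofReal (C * exp (-t)) :=
          lintegral_mono fun t => min_le_right _ _
      _ = ENNReal.ofReal (∫ t in Set.Ioi (log C), C * exp (-t)) :=
          (ofReal_integral_eq_lintegral_ofReal hint (.of_forall fun t => by positivity)).symm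
      _ = 1 := by
          rw [integral_const_mul, integral_exp_neg_Ioi, exp_neg, exp_log hC0,
            mul_inv_cancel₀ hC0.ne', ENNReal.ofReal_one]

section ProbabilityMeasure

variable {Ω : Type*} [MeasurableSpace Ω] {μ : Measure Ω} [IsProbabilityMeasure μ]

theorem lintegral_le_log_add_one_of_measure_lt_le {Z : Ω → ℝ} (hZ : Measurable Z)
    (hZ0 : ∀ ω, 0 ≤ Z ω) {C : ℝ} (hC : 1 ≤ C)
    (htail : ∀ t, 0 < t → μ {ω | t < Z ω} ≤ ENNReal.ofReal (C * exp (-t))) :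
    ∫⁻ ω, ENNReal.ofReal (Z ω) ∂μ ≤ ENNReal.ofReal (log C + 1) := by
  rw [lintegral_eq_lintegral_meas_lt μ (.of_forall hZ0) hZ.aemeasurable]
  refine le_trans (setLIntegral_mono ?_ fun t ht => le_min prob_le_one (htail t ht))
    (setLIntegral_Ioi_min_one_exp_neg_le hC)
  fun_prop

theorem integral_le_rpow_of_lintegral_rpow_le {f : Ω → ℝ} (hf : AEStronglyMeasurable f μ)
    (hf0 : ∀ ω, 0 ≤ f ω) {p L : ℝ} (hp : 1 ≤ p) (hL : 0 ≤ L)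
    (h : ∫⁻ ω, ENNReal.ofReal (f ω ^ p) ∂μ ≤ ENNReal.ofReal L) :
    ∫ ω, f ω ∂μ ≤ L ^ (1 / p) := by
  have hp0 : 0 < p := by linarith
  have hnorm : eLpNorm f 1 μ ≤ ENNReal.ofReal (L ^ (1 / p)) := calc
    eLpNorm f 1 μ ≤ eLpNorm f (ENNReal.ofReal p) μ :=
        eLpNorm_le_eLpNorm_of_exponent_le (ENNReal.one_le_ofReal.mpr hp) hf
    _ = (∫⁻ ω, ENNReal.ofReal (f ω ^ p) ∂μ) ^ (1 / p) := by
        rw [eLpNorm_eq_lintegral_rpow_enorm_toReal (by simpa using hp0) ENNReal.ofReal_ne_top,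
          ENNReal.toReal_ofReal hp0.le]
        congr 2 with ω
        rw [Real.enorm_eq_ofReal (hf0 ω), ENNReal.ofReal_rpow_of_nonneg (hf0 ω) hp0.le]
    _ ≤ ENNReal.ofReal L ^ (1 / p) := by gcongr
    _ = ENNReal.ofReal (L ^ (1 / p)) := ENNReal.ofReal_rpow_of_nonneg hL (by positivity)
  rw [integral_eq_lintegral_of_nonneg_ae (.of_forall hf0) hf]
  refine ENNReal.toReal_le_of_le_ofReal (by positivity) (le_trans ?_ hnorm)
  rw [eLpNorm_one_eq_lintegral_enorm]
  exact (lintegral_congr fun ω => Real.enorm_eq_ofReal (hf0 ω)).ge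

theorem integral_le_of_measure_lt_le_exp_neg_rpow {M : Ω → ℝ} (hM : Measurable M)
    (hM0 : ∀ ω, 0 ≤ M ω) {α β C : ℝ} (hα : 1 ≤ α) (hβ : 0 < β) (hC : 1 ≤ C)
    (htail : ∀ v, 0 ≤ v → μ {ω | v < M ω} ≤ ENNReal.ofReal (C * exp (-(v / β) ^ α))) :
    ∫ ω, M ω ∂μ ≤ β * (log C + 1) ^ (1 / α) := by
  have hα0 : 0 < α := by linarith
  have hZ0 (ω : Ω) : 0 ≤ M ω / β := div_nonneg (hM0 ω) hβ.le
  have hZ : ∫⁻ ω, ENNReal.ofReal ((M ω / β) ^ α) ∂μ ≤ ENNReal.ofReal (log C + 1) := by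
    refine lintegral_le_log_add_one_of_measure_lt_le (by fun_prop)
      (fun ω => rpow_nonneg (hZ0 ω) α) hC fun t ht => ?_
    have hset : {ω | t < (M ω / β) ^ α} = {ω | β * t ^ α⁻¹ < M ω} := by
      ext ω
      rw [Set.mem_ofPred_eq, Set.mem_ofPred_eq, ← rpow_inv_lt_iff_of_pos ht.le (hZ0 ω) hα0,
        lt_div_iff₀ hβ, mul_comm]
    have hvt : (β * t ^ α⁻¹ / β) ^ α = t := by
      rw [mul_div_cancel_left₀ _ hβ.ne', rpow_inv_rpow ht.le hα0.ne']
    simpa only [hset, hvt] using htail (β * t ^ α⁻¹) (by positivity)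
  have hmean := integral_le_rpow_of_lintegral_rpow_le (hM.div_const β).aestronglyMeasurable hZ0 hα
    (by linarith [log_nonneg hC]) hZ
  rwa [integral_div, div_le_iff₀' hβ] at hmean

end ProbabilityMeasure

theorem stmt15_general {Ω : Type*} [MeasureSpace Ω] [IsProbabilityMeasure (ℙ : Measure Ω)]
    (α β γ : ℝ) (hα : 1 ≤ α) (hβ : 0 < β) (hγ : 1 < γ)
    (n : ℕ) (hn : 1 ≤ n) (X : Fin n → Ω → ℕ)
    (hmeas : ∀ i, Measurable (X i))
    (henv : ∀ i, ∀ k : ℕ, 1 ≤ k →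
      ℙ {ω | X i ω = k} ≤ ENNReal.ofReal (γ * Real.exp (-((k : ℝ) / β) ^ α)))
    (κ : ℝ) (hκ : κ = 1 / (1 - Real.exp (-(α / β ^ α)))) :
    ∫ ω, (⨆ i, (X i ω : ℝ)) ∂ℙ
      ≤ β * Real.log (κ * γ * Real.exp 1 * n) ^ (1 / α) := by
  have : Nonempty (Fin n) := ⟨⟨0, hn⟩⟩
  have hden : 0 < 1 - exp (-(α / β ^ α)) := sub_pos.mpr (exp_neg_div_rpow_lt_one (by linarith) hβ)
  have hκ1 : 1 ≤ κ := by
    rw [hκ, le_div_iff₀ hden]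
    linarith [exp_pos (-(α / β ^ α))]
  have hC : 1 ≤ κ * γ * n :=
    one_le_mul_of_one_le_of_one_le (one_le_mul_of_one_le_of_one_le hκ1 hγ.le)
      (by exact_mod_cast hn)
  have htail (v : ℝ) (hv : 0 ≤ v) : ℙ {ω | v < ⨆ i, (X i ω : ℝ)} ≤
      ENNReal.ofReal (κ * γ * n * exp (-(v / β) ^ α)) := calc
    _ ≤ ∑ i, ℙ {ω | v < (X i ω : ℝ)} := measure_lt_ciSup_le_sum _ _ v
    _ ≤ ∑ _i : Fin n, ENNReal.ofReal (γ * κ * exp (-(v / β) ^ α)) :=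
        Finset.sum_le_sum fun i _ => by
          simpa [hκ] using measure_lt_le_of_envelope hα hβ (by linarith) (henv i) hv
    _ = _ := by
        rw [Finset.sum_const, Finset.card_univ, Fintype.card_fin, nsmul_eq_mul,
          ← ENNReal.ofReal_natCast, ← ENNReal.ofReal_mul (by positivity)]
        ring_nf
  have hlog : log (κ * γ * exp 1 * n) = log (κ * γ * n) + 1 := by
    rw [mul_right_comm, log_mul (by positivity) (exp_pos 1).ne', log_exp]
  rw [hlog]
  exact integral_le_of_measure_lt_le_exp_neg_rpow
    (Measurable.iSup fun i => measurable_from_top.comp (hmeas i))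
    (fun ω => Real.iSup_nonneg fun i => Nat.cast_nonneg _) hα hβ hC htail

/-- Let `X_1, …, X_n` be i.i.d. positive-integer valued random
variables whose common distribution belongs to the sub-exponential envelope class
`Λ(α,β,γ)` (i.e. `P(X = k) ≤ γ exp(-(k/β)^α)` for all `k ≥ 1`), with `α ≥ 1`, `β > 0`,
`γ > 1`, and let `M_n = max(X_1, …, X_n)`. Then
`E[M_n] ≤ β (ln (κ γ e n))^{1/α}` where `κ = 1/(1 - exp(-α/β^α))`. -/
theorem stmt15 {Ω : Type*} [MeasureSpace Ω] [IsProbabilityMeasure (ℙ : Measure Ω)]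
    (α β γ : ℝ) (hα : 1 ≤ α) (hβ : 0 < β) (hγ : 1 < γ)
    (n : ℕ) (hn : 1 ≤ n) (X : Fin n → Ω → ℕ)
    (hmeas : ∀ i, Measurable (X i))
    (hindep : iIndepFun X ℙ)
    (hident : ∀ i j, Measure.map (X i) ℙ = Measure.map (X j) ℙ)
    (hpos : ∀ i ω, 1 ≤ X i ω)
    (henv : ∀ i, ∀ k : ℕ, 1 ≤ k →
      ℙ {ω | X i ω = k} ≤ ENNReal.ofReal (γ * Real.exp (-((k : ℝ) / β) ^ α)))
    (hint : Integrable (fun ω => ⨆ i, (X i ω : ℝ)) ℙ)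
    (κ : ℝ) (hκ : κ = 1 / (1 - Real.exp (-(α / β ^ α)))) :
    ∫ ω, (⨆ i, (X i ω : ℝ)) ∂ℙ
      ≤ β * Real.log (κ * γ * Real.exp 1 * n) ^ (1 / α) :=
  stmt15_general α β γ hα hβ hγ n hn X hmeas henv κ hκ
end
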